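/- arXiv:2208.09946 — 6 statements merged into one kernel-verified Lean document; each statement's English description precedes it below -/
import Mathlib

section
/- In a finite orthomodular poset, for all elements a, b the set Min U(a, b') is nonempty and for every m in Min U(a, b') the meet m ∧ b exists; dually, Max L(a, b) is nonempty and for every m in Max L(a, b) the join a' ∨ m exists. -/
section
variable (A : Type*)

/-- Set of minimal upper bounds. -/
def MinU [PartialOrder A] (S : Set A) : Set A := {a | Minimal (· ∈ upperBounds S) a}

/-- Set of maximal lower bounds. -/
def MaxL [PartialOrder A] (S : Set A) : Set A := {a | Maximal (· ∈ lowerBounds S) a}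

/-- An orthomodular poset: a bounded poset with an antitone involution that is a
complementation, such that orthogonal elements have a join and the orthomodular law holds. -/
structure OMP [PartialOrder A] [BoundedOrder A] where
  compl : A → A
  compl_antitone : ∀ a b : A, a ≤ b → compl b ≤ compl a
  compl_involutive : ∀ a : A, compl (compl a) = a
  sup_compl : ∀ a : A, IsLUB {a, compl a} ⊤
  inf_compl : ∀ a : A, IsGLB {a, compl a} ⊥
  ortho_sup : ∀ a b : A, a ≤ compl b → ∃ c, IsLUB {a, b} c
  oml : ∀ a b m : A, a ≤ b → IsGLB {b, compl a} m → IsLUB {a, m} b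

end

/-!
An `m ∈ Min U(a, b')` satisfies `b' ≤ m`, so `m'` and `b'` are orthogonal: `m' ∨ b'` exists and
its complement is `m ∧ b`. An `m ∈ Max L(a, b)` satisfies `m ≤ a = a''`, so `m` and `a'` are
orthogonal and `a' ∨ m` exists. Nonemptiness holds since `⊤` (resp. `⊥`) is a bound and the
poset is finite.
-/

theorem minU_nonempty {A : Type*} [PartialOrder A] [OrderTop A] [Finite A] (S : Set A) :
    (MinU A S).Nonempty :=
  let ⟨m, _, hm⟩ := Finite.exists_le_minimal (fun _ _ => le_top : (⊤ : A) ∈ upperBounds S)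
  ⟨m, hm⟩

theorem maxL_nonempty {A : Type*} [PartialOrder A] [OrderBot A] [Finite A] (S : Set A) :
    (MaxL A S).Nonempty :=
  let ⟨m, _, hm⟩ := Finite.exists_le_maximal (fun _ _ => bot_le : (⊥ : A) ∈ lowerBounds S)
  ⟨m, hm⟩

namespace OMP

variable {A : Type*} [PartialOrder A] [BoundedOrder A] (M : OMP A)

theorem compl_le_compl_iff {a b : A} : M.compl a ≤ M.compl b ↔ b ≤ a :=
  ⟨fun h => by simpa only [M.compl_involutive] using M.compl_antitone _ _ h,
    M.compl_antitone _ _⟩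

theorem le_compl_comm {a b : A} : a ≤ M.compl b ↔ b ≤ M.compl a := by
  rw [← M.compl_le_compl_iff, M.compl_involutive]

theorem compl_le_comm {a b : A} : M.compl a ≤ b ↔ M.compl b ≤ a := by
  rw [← M.compl_le_compl_iff, M.compl_involutive]

theorem isGLB_compl_of_isLUB_image {S : Set A} {c : A} (h : IsLUB (M.compl '' S) c) :
    IsGLB S (M.compl c) :=
  ⟨fun _ hx => M.compl_le_comm.2 (h.1 (Set.mem_image_of_mem _ hx)),
    fun _ hd => M.le_compl_comm.2 <| h.2 <| by
      rintro _ ⟨x, hx, rfl⟩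
      exact M.compl_le_compl_iff.2 (hd hx)⟩

theorem exists_isGLB_pair_of_compl_le {m b : A} (h : M.compl b ≤ m) :
    ∃ x, IsGLB {m, b} x := by
  obtain ⟨c, hc⟩ := M.ortho_sup (M.compl m) (M.compl b) (M.compl_antitone _ _ h)
  exact ⟨M.compl c, M.isGLB_compl_of_isLUB_image (by rwa [Set.image_pair])⟩

theorem exists_isLUB_pair_of_le {m a : A} (h : m ≤ a) : ∃ x, IsLUB {M.compl a, m} x := by
  rw [Set.pair_comm]
  exact M.ortho_sup m (M.compl a) (by rwa [M.compl_involutive])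

end OMP

/-- In a finite orthomodular poset, `Min U(a, b')` is nonempty and for each of its members `m`
the meet `m ∧ b` exists; dually `Max L(a, b)` is nonempty and for each of its members `m` the
join `a' ∨ m` exists. -/
theorem stmt_2 {A : Type*} [PartialOrder A] [BoundedOrder A] [Finite A] (M : OMP A)
    (a b : A) :
    (MinU A {a, M.compl b}).Nonempty ∧
    (∀ m ∈ MinU A {a, M.compl b}, ∃ x, IsGLB {m, b} x) ∧
    (MaxL A {a, b}).Nonempty ∧
    (∀ m ∈ MaxL A {a, b}, ∃ x, IsLUB {M.compl a, m} x) :=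
  ⟨minU_nonempty _,
    fun _ hm => M.exists_isGLB_pair_of_compl_le (hm.prop (Set.mem_insert_of_mem _ rfl)),
    maxL_nonempty _,
    fun _ hm => M.exists_isLUB_pair_of_le (hm.prop (Set.mem_insert _ _))⟩
end

section
/- In a finite orthomodular poset with connectives ⊙ and → as defined, for all elements p, q we have (p → q) ⊙ p ≤ q, in the sense that every element of the set (p → q) ⊙ p is below q. In fact (p → q) ⊙ p = Max L(p, q). -/
section
variable {A : Type*} [PartialOrder A] [BoundedOrder A]

/-- The inexact conjunction `a ⊙ b := Min U(a, b') ∧ b` (a set of elements). -/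
def odot (M : OMP A) (a b : A) : Set A :=
  {x | ∃ m ∈ MinU A {a, M.compl b}, IsGLB {m, b} x}

/-- The inexact implication `a → b := a' ∨ Max L(a, b)` (a set of elements). -/
def arrow (M : OMP A) (a b : A) : Set A :=
  {x | ∃ m ∈ MaxL A {a, b}, IsLUB {M.compl a, m} x}

/-- Extension of `⊙` to nonempty subsets. -/
def odotS (M : OMP A) (B C : Set A) : Set A := ⋃ b ∈ B, ⋃ c ∈ C, odot M b c

/-- Extension of `→` to nonempty subsets. -/
def arrowS (M : OMP A) (B C : Set A) : Set A := ⋃ b ∈ B, ⋃ c ∈ C, arrow M b c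

/-- `B ≤₁ C`: every element of `B` is below some element of `C`. -/
def le1 (B C : Set A) : Prop := ∀ b ∈ B, ∃ c ∈ C, b ≤ c

/-- `B ≤₂ C`: every element of `C` is above some element of `B`. -/
def le2 (B C : Set A) : Prop := ∀ c ∈ C, ∃ b ∈ B, b ≤ c

end


section Aux
variable {A : Type*} [PartialOrder A] [BoundedOrder A] (M : OMP A)

lemma compl_isGLB_of_isLUB {S : Set A} {x : A} (h : IsLUB S x) :
    IsGLB (M.compl '' S) (M.compl x) := by
  constructor
  · rintro _ ⟨s, hs, rfl⟩
    exact M.compl_antitone _ _ (h.1 hs)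
  · intro y hy
    have hx : x ≤ M.compl y := by
      refine h.2 fun s hs => ?_
      have h1 : y ≤ M.compl s := hy ⟨s, hs, rfl⟩
      have h2 := M.compl_antitone _ _ h1
      rwa [M.compl_involutive] at h2
    have h3 := M.compl_antitone _ _ hx
    rwa [M.compl_involutive] at h3

lemma key_glb {p m b : A} (hm : m ≤ p) (hb : IsLUB {M.compl p, m} b) :
    IsGLB {b, p} m := by
  have h2 : IsLUB {M.compl p, M.compl b} (M.compl m) := by
    refine M.oml (M.compl p) (M.compl m) (M.compl b) (M.compl_antitone _ _ hm) ?_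
    have := compl_isGLB_of_isLUB M hb
    rw [Set.image_pair, M.compl_involutive] at this
    rwa [M.compl_involutive, Set.pair_comm]
  have h3 : IsGLB {p, b} m := by
    have := compl_isGLB_of_isLUB M h2
    rwa [Set.image_pair, M.compl_involutive, M.compl_involutive,
      M.compl_involutive] at this
  rwa [Set.pair_comm]

lemma minU_pair_eq {a c : A} (h : c ≤ a) : MinU A {a, c} = {a} := by
  have ha : a ∈ upperBounds {a, c} := by
    rintro x (rfl | rfl) <;> simp [h]
  ext x
  constructor
  · rintro ⟨hub, hmin⟩
    have hax : a ≤ x := hub (Set.mem_insert _ _)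
    exact Set.mem_singleton_iff.2 (le_antisymm (hmin ha hax) hax)
  · rintro rfl
    exact ⟨ha, fun y hy _ => hy (Set.mem_insert _ _)⟩

end Aux

/-- For all elements `p, q` of a finite orthomodular poset, `(p → q) ⊙ p = Max L(p, q)`;

in particular every element of `(p → q) ⊙ p` is below `q`. -/
theorem stmt_4 {A : Type*} [PartialOrder A] [BoundedOrder A] [Finite A] (M : OMP A)
    (p q : A) :
    odotS M (arrow M p q) {p} = MaxL A {p, q} ∧
    (∀ r ∈ odotS M (arrow M p q) {p}, r ≤ q) := by
  have key : odotS M (arrow M p q) {p} = MaxL A {p, q} := by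
    ext x
    constructor
    · intro hx
      simp only [odotS, Set.mem_iUnion, Set.mem_singleton_iff, exists_prop] at hx
      obtain ⟨b, hb, c, hc, hx⟩ := hx
      rw [hc] at hx
      obtain ⟨m, hmMax, hlub⟩ := hb
      obtain ⟨u, hu, hglb⟩ := hx
      have hp'b : M.compl p ≤ b := hlub.1 (Set.mem_insert _ _)
      rw [minU_pair_eq hp'b] at hu
      subst hu
      have hmp : m ≤ p := hmMax.1 (Set.mem_insert _ _)
      have hm_glb : IsGLB {u, p} m := key_glb M hmp hlub
      have : x = m := hglb.unique hm_glb
      subst this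
      exact hmMax
    · intro hx
      have hmp : x ≤ p := hx.1 (Set.mem_insert _ _)
      have hortho : M.compl p ≤ M.compl x := M.compl_antitone _ _ hmp
      obtain ⟨b, hb⟩ := M.ortho_sup (M.compl p) x hortho
      have hp'b : M.compl p ≤ b := hb.1 (Set.mem_insert _ _)
      simp only [odotS, Set.mem_iUnion, Set.mem_singleton_iff, exists_prop]
      refine ⟨b, ⟨x, hx, hb⟩, p, rfl, ?_⟩
      refine ⟨b, ?_, key_glb M hmp hb⟩
      rw [minU_pair_eq hp'b]
      rfl
  refine ⟨key, fun r hr => ?_⟩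
  rw [key] at hr
  exact hr.1 (Set.mem_insert_of_mem _ rfl)
end

section
/- In a finite orthomodular poset, for a nonempty subset X ⊆ A and an element p ∈ A, (p → X) ⊙ p = ⋃{Max L(p, q) : q ∈ X}; consequently (p → X) ⊙ p ≤₁ X and (p → X) ⊙ p ≤₂ X. -/
section aux
variable {A : Type*} [PartialOrder A] [BoundedOrder A]

lemma aux_isGLB_compl (M : OMP A) {a b c : A} (h : IsLUB {a, b} c) :
    IsGLB {M.compl a, M.compl b} (M.compl c) := by
  constructor
  · rintro x (rfl | rfl)
    · exact M.compl_antitone _ _ (h.1 (by simp))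
    · exact M.compl_antitone _ _ (h.1 (by simp))
  · intro x hx
    have ha : a ≤ M.compl x := by
      have := M.compl_antitone _ _ (hx (show M.compl a ∈ ({M.compl a, M.compl b} : Set A) by simp))
      simpa [M.compl_involutive] using this
    have hb : b ≤ M.compl x := by
      have := M.compl_antitone _ _ (hx (show M.compl b ∈ ({M.compl a, M.compl b} : Set A) by simp))
      simpa [M.compl_involutive] using this
    have hc : c ≤ M.compl x := h.2 (by rintro y (rfl | rfl) <;> assumption)
    have := M.compl_antitone _ _ hc
    simpa [M.compl_involutive] using this

lemma aux_glb_of_lub (M : OMP A) {m p b : A} (hmp : m ≤ p) (hb : IsLUB {M.compl p, m} b) :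
    IsGLB {b, p} m := by
  have h1 : IsGLB {p, M.compl m} (M.compl b) := by
    have := aux_isGLB_compl M hb
    simpa [M.compl_involutive] using this
  have h2 : M.compl p ≤ M.compl m := M.compl_antitone _ _ hmp
  have h3 : IsLUB {M.compl p, M.compl b} (M.compl m) := by
    apply M.oml _ _ _ h2
    simpa [M.compl_involutive, Set.pair_comm] using h1
  have h4 := aux_isGLB_compl M h3
  simpa [M.compl_involutive, Set.pair_comm] using h4

lemma aux_minU_pair {a b : A} (h : b ≤ a) : MinU A {a, b} = {a} := by
  have hamem : a ∈ upperBounds ({a, b} : Set A) := by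
    rintro y (rfl | rfl)
    · exact le_refl _
    · exact h
  ext x
  simp only [MinU, Set.mem_setOf_eq, Set.mem_singleton_iff]
  constructor
  · rintro ⟨hx, hmin⟩
    have hax : a ≤ x := hx (by simp)
    exact le_antisymm (hmin hamem hax) hax |>.symm ▸ rfl
  · rintro rfl
    exact ⟨hamem, fun y hy hya => hy (by simp)⟩

end aux


/-- For a nonempty subset `X` and an element `p` of a finite orthomodular poset,
`(p → X) ⊙ p = ⋃ {Max L(p, q) : q ∈ X}`; consequently `(p → X) ⊙ p ≤₁ X` and
`(p → X) ⊙ p ≤₂ X`. -/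
theorem stmt_6 {A : Type*} [PartialOrder A] [BoundedOrder A] [Finite A] (M : OMP A)
    (X : Set A) (hX : X.Nonempty) (p : A) :
    odotS M (arrowS M {p} X) {p} = (⋃ q ∈ X, MaxL A {p, q}) ∧
    le1 (odotS M (arrowS M {p} X) {p}) X ∧
    le2 (odotS M (arrowS M {p} X) {p}) X := by
  have key : odotS M (arrowS M {p} X) {p} = (⋃ q ∈ X, MaxL A {p, q}) := by
    ext x
    simp only [odotS, arrowS, Set.mem_iUnion, Set.mem_singleton_iff, exists_prop,
      Set.iUnion_iUnion_eq_left]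
    constructor
    · rintro ⟨b, ⟨q, hq, hb⟩, hx⟩
      obtain ⟨m, hm, hlub⟩ := hb
      obtain ⟨n, hn, hglb⟩ := hx
      have hmp : m ≤ p := hm.1 (by simp)
      have hpb : M.compl p ≤ b := hlub.1 (by simp)
      have hn' : n = b := by
        have := aux_minU_pair (a := b) (b := M.compl p) hpb
        simpa [this] using hn
      subst hn'
      have hglb' : IsGLB {n, p} m := aux_glb_of_lub M hmp hlub
      have : x = m := hglb.unique hglb'
      exact ⟨q, hq, this ▸ hm⟩
    · rintro ⟨q, hq, hx⟩
      have hxp : x ≤ p := hx.1 (by simp)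
      obtain ⟨b, hlub⟩ := M.ortho_sup (M.compl p) x (by
        have := M.compl_antitone _ _ hxp
        simpa [M.compl_involutive] using this)
      have hpb : M.compl p ≤ b := hlub.1 (by simp)
      refine ⟨b, ⟨q, hq, ⟨x, hx, hlub⟩⟩, ⟨b, ?_, aux_glb_of_lub M hxp hlub⟩⟩
      rw [aux_minU_pair hpb]; rfl
  refine ⟨key, ?_, ?_⟩
  · intro x hx
    rw [key] at hx
    simp only [Set.mem_iUnion, exists_prop] at hx
    obtain ⟨q, hq, hx⟩ := hx
    exact ⟨q, hq, hx.1 (by simp)⟩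
  · intro q hq
    have hbot : (⊥ : A) ∈ lowerBounds ({p, q} : Set A) := fun y _ => bot_le
    obtain ⟨m, -, hm⟩ := Finite.exists_le_maximal hbot
    refine ⟨m, ?_, hm.1 (by simp)⟩
    rw [key]
    simp only [Set.mem_iUnion, exists_prop]
    exact ⟨q, hq, hm⟩
end

section
/- Let (A, ≤, ', 0, 1) be a finite orthomodular poset and (T, R) a time frame with R serial. Define tense operators on A^T by P(q)(s) := Min U({q(t) : t R s}) and G(q)(s) := Max L({q(t) : s R t}). Then (P, G) satisfies: (P1) G(1)(s) = {1} and P(0)(s) = {0} for all s; (P2) p ≤ q implies G(p)(s) ≤₁ G(q)(s) and P(p)(s) ≤₂ P(q)(s) for all s; (P3) for all q ∈ A^T and s ∈ T, q(s) ≤₁ (G*P)(q)(s) and (P*G)(q)(s) ≤₂ q(s), where (G*P)(q)(s) = Max L(⋃{Min U({q(t) : t R v}) : s R v}) and (P*G)(q)(s) = Min U(⋃{Max L({q(t) : v R t}) : v R s}). -/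
section
variable {A T : Type*} [PartialOrder A]

/-- The tense operator `P(q)(s) := Min U({q(t) : t R s})`. -/
def Pop (R : T → T → Prop) (q : T → A) (s : T) : Set A := MinU A (q '' {t | R t s})

/-- The tense operator `F(q)(s) := Min U({q(t) : s R t})`. -/
def Fop (R : T → T → Prop) (q : T → A) (s : T) : Set A := MinU A (q '' {t | R s t})

/-- The tense operator `H(q)(s) := Max L({q(t) : t R s})`. -/
def Hop (R : T → T → Prop) (q : T → A) (s : T) : Set A := MaxL A (q '' {t | R t s})

/-- The tense operator `G(q)(s) := Max L({q(t) : s R t})`. -/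
def Gop (R : T → T → Prop) (q : T → A) (s : T) : Set A := MaxL A (q '' {t | R s t})

/-- A relation is serial if every element has a predecessor and a successor. -/
def Serial (R : T → T → Prop) : Prop := ∀ s : T, (∃ r, R r s) ∧ (∃ t, R s t)

end

section
variable {A : Type*} [PartialOrder A]

lemma exists_le_maximal_of_wellFoundedGT [WellFoundedGT A] (P : A → Prop) (a : A) (ha : P a) :
    ∃ b, a ≤ b ∧ Maximal P b :=
  exists_minimal_le_of_wellFoundedLT (α := Aᵒᵈ) P a ha

lemma maxL_eq_singleton_of_isGLB {S : Set A} {a : A} (h : IsGLB S a) : MaxL A S = {a} :=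
  Set.ext fun _ => h.maximal_iff

lemma minU_eq_singleton_of_isLUB {S : Set A} {a : A} (h : IsLUB S a) : MinU A S = {a} :=
  Set.ext fun _ => h.minimal_iff

lemma le1_maxL_of_subset_lowerBounds [WellFoundedGT A] {B S : Set A} (h : B ⊆ lowerBounds S) :
    le1 B (MaxL A S) := fun b hb => by
  obtain ⟨c, hbc, hc⟩ := exists_le_maximal_of_wellFoundedGT _ b (h hb)
  exact ⟨c, hc, hbc⟩

lemma le2_minU_of_subset_upperBounds [WellFoundedLT A] {B S : Set A} (h : B ⊆ upperBounds S) :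
    le2 (MinU A S) B := fun c hc => by
  obtain ⟨b, hbc, hb⟩ := exists_minimal_le_of_wellFoundedLT _ c (h hc)
  exact ⟨b, hb, hbc⟩

lemma maxL_subset_lowerBounds (S : Set A) : MaxL A S ⊆ lowerBounds S := fun _ h => h.1

lemma minU_subset_upperBounds (S : Set A) : MinU A S ⊆ upperBounds S := fun _ h => h.1

lemma mem_lowerBounds_minU {S : Set A} {a : A} (ha : a ∈ S) : a ∈ lowerBounds (MinU A S) :=
  fun _ hx => hx.1 ha

lemma mem_upperBounds_maxL {S : Set A} {a : A} (ha : a ∈ S) : a ∈ upperBounds (MaxL A S) :=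
  fun _ hx => hx.1 ha

lemma lowerBounds_image_mono {T : Type*} {p q : T → A} (hpq : ∀ t, p t ≤ q t) (X : Set T) :
    lowerBounds (p '' X) ⊆ lowerBounds (q '' X) := by
  rintro b hb _ ⟨t, ht, rfl⟩
  exact (hb ⟨t, ht, rfl⟩).trans (hpq t)

lemma upperBounds_image_anti {T : Type*} {p q : T → A} (hpq : ∀ t, p t ≤ q t) (X : Set T) :
    upperBounds (q '' X) ⊆ upperBounds (p '' X) := by
  rintro c hc _ ⟨t, ht, rfl⟩
  exact (hpq t).trans (hc ⟨t, ht, rfl⟩)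

end

theorem stmt_10_general {A T : Type*} [PartialOrder A] [BoundedOrder A] [Finite A]
    (R : T → T → Prop) :
    (∀ s : T, Gop R (fun _ => (⊤ : A)) s = {⊤} ∧ Pop R (fun _ => (⊥ : A)) s = {⊥}) ∧
    (∀ p q : T → A, (∀ t, p t ≤ q t) →
      ∀ s : T, le1 (Gop R p s) (Gop R q s) ∧ le2 (Pop R p s) (Pop R q s)) ∧
    (∀ (q : T → A) (s : T),
      le1 {q s} (MaxL A (⋃ v ∈ {v | R s v}, MinU A (q '' {t | R t v}))) ∧
      le2 (MinU A (⋃ v ∈ {v | R v s}, MaxL A (q '' {t | R v t}))) {q s}) := by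
  refine ⟨fun s => ⟨?_, ?_⟩, fun p q hpq s => ⟨?_, ?_⟩, fun q s => ⟨?_, ?_⟩⟩
  · refine maxL_eq_singleton_of_isGLB ⟨?_, fun _ _ => le_top⟩
    rintro _ ⟨t, _, rfl⟩
    exact le_rfl
  · refine minU_eq_singleton_of_isLUB ⟨?_, fun _ _ => bot_le⟩
    rintro _ ⟨t, _, rfl⟩
    exact le_rfl
  · exact le1_maxL_of_subset_lowerBounds
      ((maxL_subset_lowerBounds _).trans (lowerBounds_image_mono hpq _))
  · exact le2_minU_of_subset_upperBounds
      ((minU_subset_upperBounds _).trans (upperBounds_image_anti hpq _))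
  · refine le1_maxL_of_subset_lowerBounds (Set.singleton_subset_iff.2 ?_)
    simp only [lowerBounds_iUnion, Set.mem_iInter]
    exact fun v hsv => mem_lowerBounds_minU ⟨s, hsv, rfl⟩
  · refine le2_minU_of_subset_upperBounds (Set.singleton_subset_iff.2 ?_)
    simp only [upperBounds_iUnion, Set.mem_iInter]
    exact fun v hvs => mem_upperBounds_maxL ⟨s, hvs, rfl⟩

/-- The couple `(P, G)` of tense operators on a finite orthomodular poset with a serial time
frame forms a dynamic pair: (P1) `G(1) = 1` and `P(0) = 0`; (P2) both operators are monotone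
(w.r.t. `≤₁` resp. `≤₂`); (P3) `q ≤₁ (G*P)(q)` and `(P*G)(q) ≤₂ q`. -/
theorem stmt_10 {A T : Type*} [PartialOrder A] [BoundedOrder A] [Finite A] (M : OMP A)
    (R : T → T → Prop) (hR : Serial R) :
    (∀ s : T, Gop R (fun _ => (⊤ : A)) s = {⊤} ∧ Pop R (fun _ => (⊥ : A)) s = {⊥}) ∧
    (∀ p q : T → A, (∀ t, p t ≤ q t) →
      ∀ s : T, le1 (Gop R p s) (Gop R q s) ∧ le2 (Pop R p s) (Pop R q s)) ∧
    (∀ (q : T → A) (s : T),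
      le1 {q s} (MaxL A (⋃ v ∈ {v | R s v}, MinU A (q '' {t | R t v}))) ∧
      le2 (MinU A (⋃ v ∈ {v | R v s}, MaxL A (q '' {t | R v t}))) {q s}) :=
  stmt_10_general R
end

section
/- Let (A, ≤, ', 0, 1) be a finite orthomodular poset, (T, R) a serial time frame, B, C nonempty subsets of A^T with B ≤ C (p ≤ q pointwise for all p ∈ B, q ∈ C). Then P(B)(s) ≤₂ P(C)(s) and H(B)(s) ≤₁ H(C)(s) for all s ∈ T. -/
section
variable {A T : Type*} [PartialOrder A]

/-- The lifted tense operator `P(B)(s) := Min U({q(t) : q ∈ B, t R s})`. -/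
def PopS (R : T → T → Prop) (B : Set (T → A)) (s : T) : Set A :=
  MinU A {a | ∃ q ∈ B, ∃ t, R t s ∧ q t = a}

/-- The lifted tense operator `H(B)(s) := Max L({q(t) : q ∈ B, t R s})`. -/
def HopS (R : T → T → Prop) (B : Set (T → A)) (s : T) : Set A :=
  MaxL A {a | ∃ q ∈ B, ∃ t, R t s ∧ q t = a}

end

/-!
Pointwise `B ≤ C` and `C ≠ ∅` make the past values of `C` cofinal for those of `B`, so every upper
bound of the values of `C` bounds those of `B`; in a finite poset such a bound lies above a minimal
one. The statement for `H` is the order dual, using `B ≠ ∅`.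
-/

section Bounds
variable {A : Type*} [PartialOrder A] [Finite A] {S S' : Set A}

lemma le2_minU_of_upperBounds_subset (h : upperBounds S' ⊆ upperBounds S) :
    le2 (MinU A S) (MinU A S') := fun _ hc ↦
  let ⟨b, hbc, hb⟩ := Finite.exists_le_minimal (h hc.1)
  ⟨b, hb, hbc⟩

lemma le1_maxL_of_lowerBounds_subset (h : lowerBounds S ⊆ lowerBounds S') :
    le1 (MaxL A S) (MaxL A S') := fun _ hb ↦
  let ⟨c, hbc, hc⟩ := Finite.exists_le_maximal (h hb.1)
  ⟨c, hc, hbc⟩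

end Bounds

section PastValues
variable {A T : Type*} [PartialOrder A] (R : T → T → Prop) (s : T) {B C : Set (T → A)}

def pastValues (B : Set (T → A)) : Set A := {a | ∃ q ∈ B, ∃ t, R t s ∧ q t = a}

lemma isCofinalFor_pastValues (hC : C.Nonempty) (hBC : ∀ p ∈ B, ∀ q ∈ C, ∀ t, p t ≤ q t) :
    IsCofinalFor (pastValues R s B) (pastValues R s C) := by
  obtain ⟨q₀, hq₀⟩ := hC
  rintro _ ⟨p, hp, t, ht, rfl⟩
  exact ⟨q₀ t, ⟨q₀, hq₀, t, ht, rfl⟩, hBC p hp q₀ hq₀ t⟩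

lemma isCoinitialFor_pastValues (hB : B.Nonempty) (hBC : ∀ p ∈ B, ∀ q ∈ C, ∀ t, p t ≤ q t) :
    IsCoinitialFor (pastValues R s C) (pastValues R s B) := by
  obtain ⟨p₀, hp₀⟩ := hB
  rintro _ ⟨q, hq, t, ht, rfl⟩
  exact ⟨p₀ t, ⟨p₀, hp₀, t, ht, rfl⟩, hBC p₀ hp₀ q hq t⟩

variable [Finite A]

lemma le2_popS_of_le (hC : C.Nonempty) (hBC : ∀ p ∈ B, ∀ q ∈ C, ∀ t, p t ≤ q t) :
    le2 (PopS R B s) (PopS R C s) :=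
  le2_minU_of_upperBounds_subset <|
    upperBounds_mono_of_isCofinalFor (isCofinalFor_pastValues R s hC hBC)

lemma le1_hopS_of_le (hB : B.Nonempty) (hBC : ∀ p ∈ B, ∀ q ∈ C, ∀ t, p t ≤ q t) :
    le1 (HopS R B s) (HopS R C s) :=
  le1_maxL_of_lowerBounds_subset <|
    lowerBounds_mono_of_isCoinitialFor (isCoinitialFor_pastValues R s hB hBC)

end PastValues

theorem stmt_13_general {A T : Type*} [PartialOrder A] [Finite A]
    (R : T → T → Prop) (B C : Set (T → A)) (hB : B.Nonempty)
    (hC : C.Nonempty) (hBC : ∀ p ∈ B, ∀ q ∈ C, ∀ t, p t ≤ q t) :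
    ∀ s : T, le2 (PopS R B s) (PopS R C s) ∧ le1 (HopS R B s) (HopS R C s) :=
  fun s ↦ ⟨le2_popS_of_le R s hC hBC, le1_hopS_of_le R s hB hBC⟩

/-- If `B ≤ C` then `P(B)(s) ≤₂ P(C)(s)` and `H(B)(s) ≤₁ H(C)(s)`. -/
theorem stmt_13 {A T : Type*} [PartialOrder A] [BoundedOrder A] [Finite A] (M : OMP A)
    (R : T → T → Prop) (hR : Serial R) (B C : Set (T → A)) (hB : B.Nonempty)
    (hC : C.Nonempty) (hBC : ∀ p ∈ B, ∀ q ∈ C, ∀ t, p t ≤ q t) :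
    ∀ s : T, le2 (PopS R B s) (PopS R C s) ∧ le1 (HopS R B s) (HopS R C s) :=
  stmt_13_general R B C hB hC hBC
end

section
/- Let (A, ≤, ', 0, 1) be a finite orthomodular poset, (T, R) a serial time frame, and R* the relation defined by: s R* t iff for all q ∈ A^T, G(q)(s) ≤ q(t) ≤ F(q)(s) and H(q)(t) ≤ q(s) ≤ P(q)(t) (where an element compared with a set means comparison with all its members). Then R ⊆ R*, and for all q ∈ A^T, s ∈ T: P(q)(s) ≈₂ P*(q)(s), F(q)(s) ≈₂ F*(q)(s), H(q)(s) ≈₁ H*(q)(s), G(q)(s) ≈₁ G*(q)(s), where the starred operators are defined via R* in place of R. -/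
section
variable {A T : Type*} [PartialOrder A]

/-- The constructed preference relation `R*`: `s R* t` iff for all `q ∈ A^T`,
`G(q)(s) ≤ q(t) ≤ F(q)(s)` and `H(q)(t) ≤ q(s) ≤ P(q)(t)`. -/
def Rstar (R : T → T → Prop) (s t : T) : Prop :=
  ∀ q : T → A,
    (∀ g ∈ Gop R q s, g ≤ q t) ∧ (∀ f ∈ Fop R q s, q t ≤ f) ∧
    (∀ h ∈ Hop R q t, h ≤ q s) ∧ (∀ p ∈ Pop R q t, q s ≤ p)

/-- `X ≈₁ Y` iff `X ≤₁ Y` and `Y ≤₁ X`. -/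
def approx1 (X Y : Set A) : Prop := le1 X Y ∧ le1 Y X

/-- `X ≈₂ Y` iff `X ≤₂ Y` and `Y ≤₂ X`. -/
def approx2 (X Y : Set A) : Prop := le2 X Y ∧ le2 Y X

end

/-!
Every element of `q '' {t | s R* t}` lies between `G(q)(s)` and `F(q)(s)`, so enlarging
`{q t | s R t}` to it changes neither its upper nor its lower bounds: in a poset without infinite
descending (ascending) chains, every upper (lower) bound lies above (below) a minimal (maximal)
one. Hence the starred tense operators are *equal* to the original ones, and the relations `≈ᵢ`
hold by reflexivity.
-/

section
variable {A T : Type*} [PartialOrder A]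

lemma le1_refl (X : Set A) : le1 X X := fun x hx => ⟨x, hx, le_rfl⟩

lemma le2_refl (X : Set A) : le2 X X := fun x hx => ⟨x, hx, le_rfl⟩

lemma approx1_refl (X : Set A) : approx1 X X := ⟨le1_refl X, le1_refl X⟩

lemma approx2_refl (X : Set A) : approx2 X X := ⟨le2_refl X, le2_refl X⟩

lemma MinU_eq_of_subset_of_le_MinU [WellFoundedLT A] {S S' : Set A} (hSS' : S ⊆ S')
    (h : ∀ x ∈ S', ∀ m ∈ MinU A S, x ≤ m) : MinU A S' = MinU A S := by
  have : upperBounds S' = upperBounds S := by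
    refine (upperBounds_mono_set hSS').antisymm fun a ha x hx => ?_
    obtain ⟨m, hma, hm⟩ := exists_minimal_le_of_wellFoundedLT _ a ha
    exact (h x hx m hm).trans hma
  simp only [MinU, this]

lemma MaxL_eq_of_subset_of_MaxL_le [WellFoundedGT A] {S S' : Set A} (hSS' : S ⊆ S')
    (h : ∀ x ∈ S', ∀ m ∈ MaxL A S, m ≤ x) : MaxL A S' = MaxL A S := by
  have : lowerBounds S' = lowerBounds S := by
    refine (lowerBounds_mono_set hSS').antisymm fun a ha x hx => ?_
    obtain ⟨m, ham, hm⟩ := exists_maximal_ge_of_wellFoundedGT _ a ha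
    exact ham.trans (h x hx m hm)
  simp only [MaxL, this]

lemma Rstar_of_rel {R : T → T → Prop} {s t : T} (hst : R s t) : Rstar (A := A) R s t :=
  fun _ => ⟨fun _ hg => hg.1 ⟨t, hst, rfl⟩, fun _ hf => hf.1 ⟨t, hst, rfl⟩,
    fun _ hh => hh.1 ⟨s, hst, rfl⟩, fun _ hp => hp.1 ⟨s, hst, rfl⟩⟩

variable (R : T → T → Prop) (q : T → A) (s : T)

lemma image_past_subset_Rstar :
    q '' {t | R t s} ⊆ q '' {t | Rstar (A := A) R t s} :=
  Set.image_mono fun _ => Rstar_of_rel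

lemma image_future_subset_Rstar :
    q '' {t | R s t} ⊆ q '' {t | Rstar (A := A) R s t} :=
  Set.image_mono fun _ => Rstar_of_rel

lemma Pop_Rstar [WellFoundedLT A] : Pop (Rstar (A := A) R) q s = Pop R q s :=
  MinU_eq_of_subset_of_le_MinU (image_past_subset_Rstar R q s) <| by
    rintro _ ⟨t, ht, rfl⟩
    exact (ht q).2.2.2

lemma Fop_Rstar [WellFoundedLT A] : Fop (Rstar (A := A) R) q s = Fop R q s :=
  MinU_eq_of_subset_of_le_MinU (image_future_subset_Rstar R q s) <| by
    rintro _ ⟨t, ht, rfl⟩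
    exact (ht q).2.1

lemma Hop_Rstar [WellFoundedGT A] : Hop (Rstar (A := A) R) q s = Hop R q s :=
  MaxL_eq_of_subset_of_MaxL_le (image_past_subset_Rstar R q s) <| by
    rintro _ ⟨t, ht, rfl⟩
    exact (ht q).2.2.1

lemma Gop_Rstar [WellFoundedGT A] : Gop (Rstar (A := A) R) q s = Gop R q s :=
  MaxL_eq_of_subset_of_MaxL_le (image_future_subset_Rstar R q s) <| by
    rintro _ ⟨t, ht, rfl⟩
    exact (ht q).1

end

theorem stmt_18_general {A T : Type*} [PartialOrder A] [Finite A]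
    (R : T → T → Prop) :
    (∀ s t : T, R s t → Rstar (A := A) R s t) ∧
    (∀ (q : T → A) (s : T),
      approx2 (Pop R q s) (Pop (Rstar (A := A) R) q s) ∧
      approx2 (Fop R q s) (Fop (Rstar (A := A) R) q s) ∧
      approx1 (Hop R q s) (Hop (Rstar (A := A) R) q s) ∧
      approx1 (Gop R q s) (Gop (Rstar (A := A) R) q s)) := by
  refine ⟨fun _ _ => Rstar_of_rel, fun q s => ?_⟩
  rw [Pop_Rstar, Fop_Rstar, Hop_Rstar, Gop_Rstar]
  exact ⟨approx2_refl _, approx2_refl _, approx1_refl _, approx1_refl _⟩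

/-- `R ⊆ R*`, and the tense operators constructed by `(T, R*)` agree with those constructed
by `(T, R)` up to the equivalences `≈₁` (for `H`, `G`) and `≈₂` (for `P`, `F`). -/
theorem stmt_18 {A T : Type*} [PartialOrder A] [BoundedOrder A] [Finite A] (M : OMP A)
    (R : T → T → Prop) (hR : Serial R) :
    (∀ s t : T, R s t → Rstar (A := A) R s t) ∧
    (∀ (q : T → A) (s : T),
      approx2 (Pop R q s) (Pop (Rstar (A := A) R) q s) ∧
      approx2 (Fop R q s) (Fop (Rstar (A := A) R) q s) ∧
      approx1 (Hop R q s) (Hop (Rstar (A := A) R) q s) ∧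
      approx1 (Gop R q s) (Gop (Rstar (A := A) R) q s)) :=
  stmt_18_general R
end
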